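/- Let p̂ : {0,1}^5 → ℝ be the joint distribution of (X, Z, Y, S, T) induced by some full SCM, and suppose p̂ gives probability greater than 0 to the event {X = 1, Y = 1}. Then the set of values of PN = P(Y_{X=0} = 0, X = 1, Y = 1)/P(X = 1, Y = 1) attained by full SCMs whose induced joint distribution of (X, Z, Y, S, T) equals p̂ is equal to the set of values of PN attained by reduced SCMs whose parameter γ equals the p̂-probability of {S = 1} and whose induced joint distribution of (X, Z, Y, S) equals the corresponding marginal of p̂. In particular, the tight lower and upper bounds on PN computed over the full models coincide with those computed over the reduced models. -/

import Mathlib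

open Finset

attribute [local instance] Classical.propDecidable

/-- A reduced SCM as in the paper (with its exogenous types bundled):
exogenous `U1`, `U2`, a parameter `γ` for the binary pre-treatment variable
`S`, and mechanisms `fX`, `fZ`, `fY`. -/
structure ReducedSCM where
  U1 : Type
  U2 : Type
  [fin1 : Fintype U1]
  [fin2 : Fintype U2]
  p1 : U1 → ℝ
  p2 : U2 → ℝ
  gamma : ℝ
  p1_nonneg : ∀ u, 0 ≤ p1 u
  p2_nonneg : ∀ u, 0 ≤ p2 u
  p1_sum : ∑ u, p1 u = 1
  p2_sum : ∑ u, p2 u = 1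
  gamma_nonneg : 0 ≤ gamma
  gamma_le_one : gamma ≤ 1
  fX : U1 → Bool
  fZ : Bool → Bool → U2 → Bool
  fY : Bool → U1 → Bool

attribute [instance] ReducedSCM.fin1 ReducedSCM.fin2

namespace ReducedSCM

/-- Probability of a unit `(u1, u2, s)`. -/
def w (M : ReducedSCM) (u : M.U1 × M.U2 × Bool) : ℝ :=
  M.p1 u.1 * M.p2 u.2.1 * (if u.2.2 then M.gamma else 1 - M.gamma)

/-- Probability of an event. -/
noncomputable def P (M : ReducedSCM) (E : M.U1 × M.U2 × Bool → Prop) : ℝ :=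
  ∑ u, if E u then M.w u else 0

def S (M : ReducedSCM) (u : M.U1 × M.U2 × Bool) : Bool := u.2.2

def X (M : ReducedSCM) (u : M.U1 × M.U2 × Bool) : Bool := M.fX u.1

def Z (M : ReducedSCM) (u : M.U1 × M.U2 × Bool) : Bool := M.fZ (M.S u) (M.X u) u.2.1

def Y (M : ReducedSCM) (u : M.U1 × M.U2 × Bool) : Bool := M.fY (M.Z u) u.1

/-- Potential outcome `Y_{X=x}`. -/
def Yx (M : ReducedSCM) (x : Bool) (u : M.U1 × M.U2 × Bool) : Bool :=
  M.fY (M.fZ (M.S u) x u.2.1) u.1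

/-- Probability of necessity `PN = P(Y_{X=0} = 0, X = 1, Y = 1) / P(X = 1, Y = 1)`. -/
noncomputable def PN (M : ReducedSCM) : ℝ :=
  M.P (fun u => M.Yx false u = false ∧ M.X u = true ∧ M.Y u = true)
    / M.P (fun u => M.X u = true ∧ M.Y u = true)

/-- Probability of necessity and sufficiency `PNS = P(Y_{X=1} = 1, Y_{X=0} = 0)`. -/
noncomputable def PNS (M : ReducedSCM) : ℝ :=
  M.P (fun u => M.Yx true u = true ∧ M.Yx false u = false)

end ReducedSCM

/-- A full SCM as in the paper (with its exogenous types bundled): exogenous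
`U1`, `U2`, `U5`, `U6` and mechanisms `fT`, `fS`, `fX`, `fZ`, `fY`. -/
structure FullSCM where
  U1 : Type
  U2 : Type
  U5 : Type
  U6 : Type
  [fin1 : Fintype U1]
  [fin2 : Fintype U2]
  [fin5 : Fintype U5]
  [fin6 : Fintype U6]
  p1 : U1 → ℝ
  p2 : U2 → ℝ
  p5 : U5 → ℝ
  p6 : U6 → ℝ
  p1_nonneg : ∀ u, 0 ≤ p1 u
  p2_nonneg : ∀ u, 0 ≤ p2 u
  p5_nonneg : ∀ u, 0 ≤ p5 u
  p6_nonneg : ∀ u, 0 ≤ p6 u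
  p1_sum : ∑ u, p1 u = 1
  p2_sum : ∑ u, p2 u = 1
  p5_sum : ∑ u, p5 u = 1
  p6_sum : ∑ u, p6 u = 1
  fT : U6 → Bool
  fS : Bool → U5 → Bool
  fX : U1 → Bool
  fZ : Bool → Bool → U2 → Bool
  fY : Bool → U1 → Bool

attribute [instance] FullSCM.fin1 FullSCM.fin2 FullSCM.fin5 FullSCM.fin6

namespace FullSCM

/-- Probability of a unit `(u1, u2, u5, u6)`. -/
def w (M : FullSCM) (u : M.U1 × M.U2 × M.U5 × M.U6) : ℝ :=
  M.p1 u.1 * M.p2 u.2.1 * M.p5 u.2.2.1 * M.p6 u.2.2.2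

/-- Probability of an event. -/
noncomputable def P (M : FullSCM) (E : M.U1 × M.U2 × M.U5 × M.U6 → Prop) : ℝ :=
  ∑ u, if E u then M.w u else 0

def T (M : FullSCM) (u : M.U1 × M.U2 × M.U5 × M.U6) : Bool := M.fT u.2.2.2

def S (M : FullSCM) (u : M.U1 × M.U2 × M.U5 × M.U6) : Bool := M.fS (M.T u) u.2.2.1

def X (M : FullSCM) (u : M.U1 × M.U2 × M.U5 × M.U6) : Bool := M.fX u.1

def Z (M : FullSCM) (u : M.U1 × M.U2 × M.U5 × M.U6) : Bool :=
  M.fZ (M.S u) (M.X u) u.2.1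

def Y (M : FullSCM) (u : M.U1 × M.U2 × M.U5 × M.U6) : Bool := M.fY (M.Z u) u.1

/-- Potential outcome `Y_{X=x}`. -/
def Yx (M : FullSCM) (x : Bool) (u : M.U1 × M.U2 × M.U5 × M.U6) : Bool :=
  M.fY (M.fZ (M.S u) x u.2.1) u.1

/-- Probability of necessity `PN = P(Y_{X=0} = 0, X = 1, Y = 1) / P(X = 1, Y = 1)`. -/
noncomputable def PN (M : FullSCM) : ℝ :=
  M.P (fun u => M.Yx false u = false ∧ M.X u = true ∧ M.Y u = true)
    / M.P (fun u => M.X u = true ∧ M.Y u = true)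

/-- Probability of necessity and sufficiency `PNS = P(Y_{X=1} = 1, Y_{X=0} = 0)`. -/
noncomputable def PNS (M : FullSCM) : ℝ :=
  M.P (fun u => M.Yx true u = true ∧ M.Yx false u = false)

end FullSCM

/-- Probability that a distribution `p̂` on `(x, z, y, s, t) ∈ {0,1}^5` assigns
to an event. -/
noncomputable def phatP (phat : Bool × Bool × Bool × Bool × Bool → ℝ)
    (E : Bool × Bool × Bool × Bool × Bool → Prop) : ℝ :=
  ∑ v, if E v then phat v else 0

/-- A full SCM induces `p̂` as the joint distribution of `(X, Z, Y, S, T)`. -/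
def FullSCM.induces (M : FullSCM)
    (phat : Bool × Bool × Bool × Bool × Bool → ℝ) : Prop :=
  ∀ x z y s t : Bool,
    M.P (fun u => M.X u = x ∧ M.Z u = z ∧ M.Y u = y ∧ M.S u = s ∧ M.T u = t)
      = phat (x, z, y, s, t)

/-- A reduced SCM induces the `(X, Z, Y, S)`-marginal of `p̂` as the joint
distribution of `(X, Z, Y, S)`. -/
def ReducedSCM.inducesMarginal (M : ReducedSCM)
    (phat : Bool × Bool × Bool × Bool × Bool → ℝ) : Prop :=
  ∀ x z y s : Bool,
    M.P (fun u => M.X u = x ∧ M.Z u = z ∧ M.Y u = y ∧ M.S u = s)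
      = ∑ t : Bool, phat (x, z, y, s, t)


/-!
In both models `X`, `Z`, `Y` and `Y_{X=0}` are functions of the exogenous pair `(u1, u2)` and
of `S`, and `(u1, u2)` is independent of `(S, T)`. Hence every probability involved is a sum over
`s` of a mass under `p1 ⊗ p2` times the probability of `S = s` (and `T = t`). So a full model and
the reduced model with the same mechanisms and `γ = P(S = 1)` have the same PN and the same law
of `(X, Z, Y, S)`. Conversely, a reduced model reproducing the marginal of `p̂` becomes a full
model of `p̂` once it is given the mechanisms of `S` and `T` of any full model of `p̂`: the law of
`(X, Z, Y)` given `S = s` is pinned down by the marginal wherever `P(S = s) > 0`, and is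
irrelevant elsewhere.
-/

theorem Fintype.sum_sum_ite_comp_mul {α β γ : Type*} [Fintype α] [Fintype β] [Fintype γ]
    (a : α → ℝ) (b : β → ℝ) (g : β → γ) (A : α → γ → Prop) :
    ∑ x, ∑ y, (if A x (g y) then a x * b y else 0)
      = ∑ c, (∑ x, if A x c then a x else 0) * ∑ y, if g y = c then b y else 0 := by
  simp_rw [Finset.sum_mul_sum]
  symm
  rw [Finset.sum_comm]
  refine Finset.sum_congr rfl fun x _ => ?_
  rw [Finset.sum_comm]
  refine Finset.sum_congr rfl fun y _ => ?_
  rw [Fintype.sum_eq_single (g y) fun c hc => by simp [Ne.symm hc]]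
  simp [ite_mul]

namespace ReducedSCM

variable (N : ReducedSCM)

noncomputable def exoMass (A : N.U1 → N.U2 → Prop) : ℝ :=
  ∑ u1, ∑ u2, if A u1 u2 then N.p1 u1 * N.p2 u2 else 0

def lawS (s : Bool) : ℝ := if s then N.gamma else 1 - N.gamma

/-- The law of `(X, Z, Y)` given `S = s`. -/
noncomputable def condLaw (x z y s : Bool) : ℝ :=
  N.exoMass fun a b => N.fX a = x ∧ N.fZ s (N.fX a) b = z ∧ N.fY (N.fZ s (N.fX a) b) a = y

theorem P_eq_sum_exoMass_mul_lawS (A : N.U1 → N.U2 → Bool → Prop) :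
    N.P (fun u => A u.1 u.2.1 u.2.2) = ∑ s, N.exoMass (fun a b => A a b s) * N.lawS s := by
  simp only [P, w, exoMass, lawS, Fintype.sum_prod_type, Finset.sum_mul, ite_mul, zero_mul]
  symm
  rw [Finset.sum_comm]
  exact Finset.sum_congr rfl fun _ _ => Finset.sum_comm

theorem P_XZYS (x z y s : Bool) :
    N.P (fun u => N.X u = x ∧ N.Z u = z ∧ N.Y u = y ∧ N.S u = s) =
      N.condLaw x z y s * N.lawS s := by
  refine (N.P_eq_sum_exoMass_mul_lawS fun a b s' => N.fX a = x ∧ N.fZ s' (N.fX a) b = z ∧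
    N.fY (N.fZ s' (N.fX a) b) a = y ∧ s' = s).trans ?_
  rw [Fintype.sum_eq_single s fun s' hs' => by simp [hs', exoMass]]
  simp only [and_true]
  rfl

theorem P_S_eq_true : N.P (fun u => N.S u = true) = N.gamma := by
  refine (N.P_eq_sum_exoMass_mul_lawS fun _ _ s => s = true).trans ?_
  simp [exoMass, lawS, ← Finset.mul_sum, N.p1_sum, N.p2_sum]

end ReducedSCM

namespace FullSCM

variable (M : FullSCM)

noncomputable def lawST (s t : Bool) : ℝ :=
  ∑ u5, ∑ u6, if (M.fS (M.fT u6) u5, M.fT u6) = (s, t) then M.p5 u5 * M.p6 u6 else 0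

noncomputable def lawS (s : Bool) : ℝ := ∑ t, M.lawST s t

theorem lawST_nonneg (s t : Bool) : 0 ≤ M.lawST s t :=
  Finset.sum_nonneg fun _ _ => Finset.sum_nonneg fun _ _ => by
    split_ifs
    · exact mul_nonneg (M.p5_nonneg _) (M.p6_nonneg _)
    · exact le_rfl

theorem lawS_nonneg (s : Bool) : 0 ≤ M.lawS s :=
  Finset.sum_nonneg fun t _ => M.lawST_nonneg s t

theorem lawS_true_add_lawS_false : M.lawS true + M.lawS false = 1 := by
  calc M.lawS true + M.lawS false = ∑ u5, ∑ u6, M.p5 u5 * M.p6 u6 := by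
        simp only [lawS, lawST, Fintype.sum_bool, ← Finset.sum_add_distrib]
        refine Finset.sum_congr rfl fun u5 _ => Finset.sum_congr rfl fun u6 _ => ?_
        generalize M.fS (M.fT u6) u5 = s
        generalize M.fT u6 = t
        cases s <;> cases t <;> simp
    _ = 1 := by rw [← Finset.sum_mul_sum, M.p5_sum, M.p6_sum, one_mul]

noncomputable def toReduced : ReducedSCM where
  U1 := M.U1
  U2 := M.U2
  p1 := M.p1
  p2 := M.p2
  gamma := M.lawS true
  p1_nonneg := M.p1_nonneg
  p2_nonneg := M.p2_nonneg
  p1_sum := M.p1_sum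
  p2_sum := M.p2_sum
  gamma_nonneg := M.lawS_nonneg true
  gamma_le_one := by linarith [M.lawS_true_add_lawS_false, M.lawS_nonneg false]
  fX := M.fX
  fZ := M.fZ
  fY := M.fY

theorem toReduced_lawS : M.toReduced.lawS = M.lawS := by
  funext s
  cases s
  · show 1 - M.lawS true = M.lawS false
    linarith [M.lawS_true_add_lawS_false]
  · rfl

theorem P_eq_sum_exoMass_mul_lawST (A : M.U1 → M.U2 → Bool → Bool → Prop) :
    M.P (fun u => A u.1 u.2.1 (M.S u) (M.T u)) =
      ∑ s, ∑ t, M.toReduced.exoMass (fun a b => A a b s t) * M.lawST s t := by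
  have h := Fintype.sum_sum_ite_comp_mul (fun x : M.U1 × M.U2 => M.p1 x.1 * M.p2 x.2)
    (fun y : M.U5 × M.U6 => M.p5 y.1 * M.p6 y.2) (fun y => (M.fS (M.fT y.2) y.1, M.fT y.2))
    (fun x c => A x.1 x.2 c.1 c.2)
  simp only [Fintype.sum_prod_type, mul_assoc] at h
  simp only [P, w, S, T, ReducedSCM.exoMass, lawST, Fintype.sum_prod_type, mul_assoc]
  exact h

theorem P_XZYST (x z y s t : Bool) :
    M.P (fun u => M.X u = x ∧ M.Z u = z ∧ M.Y u = y ∧ M.S u = s ∧ M.T u = t) =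
      M.toReduced.condLaw x z y s * M.lawST s t := by
  refine (M.P_eq_sum_exoMass_mul_lawST fun a b s' t' => M.fX a = x ∧ M.fZ s' (M.fX a) b = z ∧
    M.fY (M.fZ s' (M.fX a) b) a = y ∧ s' = s ∧ t' = t).trans ?_
  rw [Fintype.sum_eq_single s fun s' hs' => by simp [hs', ReducedSCM.exoMass],
    Fintype.sum_eq_single t fun t' ht' => by simp [ht', ReducedSCM.exoMass]]
  simp only [and_true]
  rfl

theorem P_eq_toReduced_P (A : M.U1 → M.U2 → Bool → Prop) :
    M.P (fun u => A u.1 u.2.1 (M.S u)) = M.toReduced.P (fun u => A u.1 u.2.1 u.2.2) := by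
  refine (M.P_eq_sum_exoMass_mul_lawST fun a b s _ => A a b s).trans
    (Eq.trans ?_ (M.toReduced.P_eq_sum_exoMass_mul_lawS A).symm)
  simp only [toReduced_lawS, lawS, Finset.mul_sum]

theorem toReduced_PN : M.toReduced.PN = M.PN := by
  unfold ReducedSCM.PN FullSCM.PN
  congr 1
  · exact (M.P_eq_toReduced_P fun a b s => M.fY (M.fZ s false b) a = false ∧ M.fX a = true ∧
      M.fY (M.fZ s (M.fX a) b) a = true).symm
  · exact (M.P_eq_toReduced_P fun a b s => M.fX a = true ∧
      M.fY (M.fZ s (M.fX a) b) a = true).symm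

variable {phat : Bool × Bool × Bool × Bool × Bool → ℝ}

theorem phatP_eq_P (h : M.induces phat) (E : Bool × Bool × Bool × Bool × Bool → Prop) :
    phatP phat E = M.P (fun u => E (M.X u, M.Z u, M.Y u, M.S u, M.T u)) := by
  have hphat : ∀ v, phat v = M.P (fun u => (M.X u, M.Z u, M.Y u, M.S u, M.T u) = v) := by
    rintro ⟨x, z, y, s, t⟩
    rw [← h]
    simp only [Prod.mk.injEq]
  simp only [phatP, hphat, P, Finset.ite_sum_zero]
  rw [Finset.sum_comm]
  refine Finset.sum_congr rfl fun u _ => ?_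
  rw [Fintype.sum_eq_single (M.X u, M.Z u, M.Y u, M.S u, M.T u) fun v hv => by simp [Ne.symm hv]]
  simp

theorem toReduced_gamma (h : M.induces phat) :
    M.toReduced.gamma = phatP phat (fun v => v.2.2.2.1 = true) := by
  rw [M.phatP_eq_P h, ← M.toReduced.P_S_eq_true]
  exact (M.P_eq_toReduced_P fun _ _ s => s = true).symm

theorem sum_phat_eq_condLaw_mul_lawS (h : M.induces phat) (x z y s : Bool) :
    ∑ t, phat (x, z, y, s, t) = M.toReduced.condLaw x z y s * M.lawS s := by
  simp only [lawS, Finset.mul_sum, ← M.P_XZYST, h x z y s]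

theorem toReduced_inducesMarginal (h : M.induces phat) : M.toReduced.inducesMarginal phat :=
  fun x z y s => by rw [ReducedSCM.P_XZYS, toReduced_lawS, M.sum_phat_eq_condLaw_mul_lawS h]

theorem induces_of_toReduced_inducesMarginal {M0 : FullSCM} (h0 : M0.induces phat)
    (hST : M.lawST = M0.lawST) (hM : M.toReduced.inducesMarginal phat) : M.induces phat := by
  intro x z y s t
  have hS : M.lawS = M0.lawS := funext fun s => by simp only [lawS, hST]
  have hcond : M.toReduced.condLaw x z y s * M0.lawS s =
      M0.toReduced.condLaw x z y s * M0.lawS s := by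
    rw [← M0.sum_phat_eq_condLaw_mul_lawS h0, ← hM, ReducedSCM.P_XZYS, toReduced_lawS, hS]
  rw [← h0, P_XZYST, P_XZYST, hST]
  rcases eq_or_ne (M0.lawS s) 0 with hs | hs
  · have hst : M0.lawST s t = 0 :=
      (Finset.sum_eq_zero_iff_of_nonneg fun t _ => M0.lawST_nonneg s t).1 hs t (mem_univ t)
    rw [hst, mul_zero, mul_zero]
  · rw [mul_right_cancel₀ hs hcond]

end FullSCM

noncomputable def ReducedSCM.toFull (N : ReducedSCM) (M0 : FullSCM) : FullSCM where
  U1 := N.U1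
  U2 := N.U2
  U5 := M0.U5
  U6 := M0.U6
  p1 := N.p1
  p2 := N.p2
  p5 := M0.p5
  p6 := M0.p6
  p1_nonneg := N.p1_nonneg
  p2_nonneg := N.p2_nonneg
  p5_nonneg := M0.p5_nonneg
  p6_nonneg := M0.p6_nonneg
  p1_sum := N.p1_sum
  p2_sum := N.p2_sum
  p5_sum := M0.p5_sum
  p6_sum := M0.p6_sum
  fT := M0.fT
  fS := M0.fS
  fX := N.fX
  fZ := N.fZ
  fY := N.fY

theorem ReducedSCM.toReduced_toFull (N : ReducedSCM) (M0 : FullSCM)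
    (h : N.gamma = M0.lawS true) : (N.toFull M0).toReduced = N := by
  cases N
  subst h
  rfl

theorem PN_values_full_eq_reduced_general
    (phat : Bool × Bool × Bool × Bool × Bool → ℝ)
    (hind : ∃ M0 : FullSCM, M0.induces phat) :
    {r : ℝ | ∃ M : FullSCM, M.induces phat ∧ M.PN = r}
      = {r : ℝ | ∃ M' : ReducedSCM,
          M'.gamma = phatP phat (fun v => v.2.2.2.1 = true) ∧
          M'.inducesMarginal phat ∧ M'.PN = r} := by
  ext r
  constructor
  · rintro ⟨M, hM, rfl⟩
    exact ⟨M.toReduced, M.toReduced_gamma hM, M.toReduced_inducesMarginal hM, M.toReduced_PN⟩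
  · rintro ⟨N, hγ, hN, rfl⟩
    obtain ⟨M0, h0⟩ := hind
    have hred : (N.toFull M0).toReduced = N :=
      N.toReduced_toFull M0 (hγ.trans (M0.toReduced_gamma h0).symm)
    refine ⟨N.toFull M0,
      (N.toFull M0).induces_of_toReduced_inducesMarginal h0 rfl (hred ▸ hN), ?_⟩
    rw [← (N.toFull M0).toReduced_PN, hred]

/-- If `p̂` is the joint distribution of `(X, Z, Y, S, T)` of some
full SCM and `p̂(X = 1, Y = 1) > 0`, then the set of PN values attained by full
SCMs inducing `p̂` equals the set of PN values attained by reduced SCMs whose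
`γ` is `p̂(S = 1)` and whose `(X, Z, Y, S)`-distribution is the marginal of `p̂`. -/
theorem PN_values_full_eq_reduced
    (phat : Bool × Bool × Bool × Bool × Bool → ℝ)
    (hind : ∃ M0 : FullSCM, M0.induces phat)
    (hpos : 0 < phatP phat (fun v => v.1 = true ∧ v.2.2.1 = true)) :
    {r : ℝ | ∃ M : FullSCM, M.induces phat ∧ M.PN = r}
      = {r : ℝ | ∃ M' : ReducedSCM,
          M'.gamma = phatP phat (fun v => v.2.2.2.1 = true) ∧
          M'.inducesMarginal phat ∧ M'.PN = r} :=
  PN_values_full_eq_reduced_general phat hind
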